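/- arXiv:2601.22721 — 2 statements merged into one kernel-verified Lean document; each statement's English description precedes it below -/
import Mathlib

section
/- Comma squares in Cat are exact: for functors f : B → D and g : A → D, writing (f ↓ g) for the comma category with projections dom : (f↓g) → B and cod : (f↓g) → A, the canonical comparison between the composite profunctors dom_⋄ ∘ cod° and f° ∘ g_⋄ (both profunctors from A to B) is an isomorphism; concretely, for all a ∈ A, b ∈ B the canonical map colim over the comma data computing (dom_⋄ ∘ cod°)(b,a) → D(f(b), g(a)) is bijective. -/
open CategoryTheory

/-- Data computing the coend `(dom_⋄ ∘ cod°)(b, a) = ∫^{e ∈ (f↓g)} B(b, dom e) × A(cod e, a)`. -/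
def commaEval {B A D : Type*} [Category B] [Category A] [Category D]
    (f : B ⥤ D) (g : A ⥤ D) (b : B) (a : A)
    (p : Σ e : Comma f g, (b ⟶ e.left) × (e.right ⟶ a)) : f.obj b ⟶ g.obj a :=
  f.map p.2.1 ≫ p.1.hom ≫ g.map p.2.2

/-- The coend relation identifying data along morphisms of the comma category. -/
def commaRel {B A D : Type*} [Category B] [Category A] [Category D]
    (f : B ⥤ D) (g : A ⥤ D) (b : B) (a : A)
    (p q : Σ e : Comma f g, (b ⟶ e.left) × (e.right ⟶ a)) : Prop :=
  ∃ m : p.1 ⟶ q.1, p.2.1 ≫ m.left = q.2.1 ∧ p.2.2 = m.right ≫ q.2.2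

/-!
Every datum `(e, u : b ⟶ dom e, v : cod e ⟶ a)` of the coend is connected to the datum
`((b, a, φ), 𝟙, 𝟙)`, where `φ = f u ≫ e.hom ≫ g v` is its evaluation. So each connected
component contains exactly one datum with identity legs, and it is determined by its evaluation.
-/

section

variable {B A D : Type*} [Category B] [Category A] [Category D] (f : B ⥤ D) (g : A ⥤ D)
  (b : B) (a : A)

def commaRepr (φ : f.obj b ⟶ g.obj a) : Σ e : Comma f g, (b ⟶ e.left) × (e.right ⟶ a) :=
  ⟨⟨b, a, φ⟩, 𝟙 b, 𝟙 a⟩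

@[simp]
lemma commaEval_commaRepr (φ : f.obj b ⟶ g.obj a) :
    commaEval f g b a (commaRepr f g b a φ) = φ := by
  simp [commaEval, commaRepr]

lemma commaEval_eq_of_commaRel {p q : Σ e : Comma f g, (b ⟶ e.left) × (e.right ⟶ a)}
    (h : commaRel f g b a p q) : commaEval f g b a p = commaEval f g b a q := by
  obtain ⟨m, hleft, hright⟩ := h
  simp only [commaEval, ← hleft, hright, Functor.map_comp, Category.assoc]
  rw [m.w_assoc]

lemma eqvGen_commaRel_commaRepr (p : Σ e : Comma f g, (b ⟶ e.left) × (e.right ⟶ a)) :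
    Relation.EqvGen (commaRel f g b a) p (commaRepr f g b a (commaEval f g b a p)) := by
  obtain ⟨e, u, v⟩ := p
  -- a common source: the datum over `(b, cod e, f u ≫ e.hom)` maps to both
  let s : Σ e : Comma f g, (b ⟶ e.left) × (e.right ⟶ a) :=
    ⟨⟨b, e.right, f.map u ≫ e.hom⟩, 𝟙 b, v⟩
  have to_p : commaRel f g b a s ⟨e, u, v⟩ :=
    ⟨{ left := u, right := 𝟙 _ }, by simp [s], by simp [s]⟩
  have to_repr : commaRel f g b a s (commaRepr f g b a (commaEval f g b a ⟨e, u, v⟩)) :=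
    ⟨{ left := 𝟙 b, right := v, w := by simp [commaEval, commaRepr, s] },
      by simp [s, commaRepr], by simp [s, commaRepr]⟩
  exact .trans _ _ _ (.symm _ _ (.rel _ _ to_p)) (.rel _ _ to_repr)

end

/-- Comma squares in `Cat` are exact: the canonical comparison from the coend
`(dom_⋄ ∘ cod°)(b, a)` to `D(f b, g a)` is well defined and bijective, i.e. the
evaluation is invariant under the coend relation, surjective, and any two data
with equal evaluation are connected by a zig-zag. -/
theorem stmt_10 {B A D : Type*} [Category B] [Category A] [Category D]
    (f : B ⥤ D) (g : A ⥤ D) (b : B) (a : A) :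
    (∀ p q, commaRel f g b a p q → commaEval f g b a p = commaEval f g b a q) ∧
      Function.Surjective (commaEval f g b a) ∧
      (∀ p q, commaEval f g b a p = commaEval f g b a q →
        Relation.EqvGen (commaRel f g b a) p q) := by
  refine ⟨fun _ _ ↦ commaEval_eq_of_commaRel f g b a,
    fun φ ↦ ⟨commaRepr f g b a φ, commaEval_commaRepr f g b a φ⟩, fun p q h ↦ ?_⟩
  refine .trans _ _ _ (eqvGen_commaRel_commaRepr f g b a p) ?_
  rw [h]
  exact .symm _ _ (eqvGen_commaRel_commaRepr f g b a q)
end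

section
/- In Cat, a square of functors with a natural transformation τ : x∘u ⇒ y∘v is exact if and only if for every b ∈ B, c ∈ C, every arrow ρ : x(b) → y(c) in D factors as ρ = y(φ) ∘ τ_a ∘ x(ψ) for some a ∈ A, ψ : b → u(a), φ : v(a) → c, and moreover any two such factorizations are connected by a zig-zag in the appropriate category of factorizations; in particular, for a comma square this holds, giving: every arrow x(b) → y(c) factors essentially uniquely through the comma object of x and y. -/
open CategoryTheory

section
universe v₁ v₂ v₃ v₄ u₁ u₂ u₃ u₄
variable {A : Type u₁} {B : Type u₂} {C : Type u₃} {D : Type u₄}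
  [Category.{v₁} A] [Category.{v₂} B] [Category.{v₃} C] [Category.{v₄} D]

/-- Zig-zag relation on the category of factorizations of arrows through a
square `τ : x ∘ u ⟶ y ∘ v`. -/
def factRel (u : A ⥤ B) (v : A ⥤ C) (b : B) (c : C)
    (p q : Σ a : A, (b ⟶ u.obj a) × (v.obj a ⟶ c)) : Prop :=
  ∃ m : p.1 ⟶ q.1, p.2.1 ≫ u.map m = q.2.1 ∧ p.2.2 = v.map m ≫ q.2.2

/-- Evaluation of factorization data: `(a, ψ, φ) ↦ y(φ) ∘ τ_a ∘ x(ψ)`. -/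
def factEval (u : A ⥤ B) (v : A ⥤ C) (x : B ⥤ D) (y : C ⥤ D)
    (τ : u ⋙ x ⟶ v ⋙ y) {b : B} {c : C}
    (p : Σ a : A, (b ⟶ u.obj a) × (v.obj a ⟶ c)) : x.obj b ⟶ y.obj c :=
  x.map p.2.1 ≫ τ.app p.1 ≫ y.map p.2.2

lemma factEval_rel (u : A ⥤ B) (v : A ⥤ C) (x : B ⥤ D) (y : C ⥤ D)
    (τ : u ⋙ x ⟶ v ⋙ y) {b : B} {c : C}
    (p q : Σ a : A, (b ⟶ u.obj a) × (v.obj a ⟶ c)) (h : factRel u v b c p q) :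
    factEval u v x y τ p = factEval u v x y τ q := by
  obtain ⟨m, h1, h2⟩ := h
  have hnat := τ.naturality m
  simp only [Functor.comp_map] at hnat
  simp only [factEval, ← h1, h2, Functor.map_comp, Category.assoc]
  rw [← reassoc_of% hnat]

/-- Exactness of a square `τ : x ∘ u ⟶ y ∘ v` in `Cat`: for all `b`, `c`, the
canonical map from the colimit (the quotient of factorization data by the
zig-zag relation) to `D(x b, y c)` is bijective. -/
def IsExactSq (u : A ⥤ B) (v : A ⥤ C) (x : B ⥤ D) (y : C ⥤ D)
    (τ : u ⋙ x ⟶ v ⋙ y) : Prop :=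
  ∀ (b : B) (c : C),
    Function.Bijective
      ((Quot.lift (factEval u v x y τ) (fun p q h => factEval_rel u v x y τ p q h)) :
        Quot (factRel u v b c) → (x.obj b ⟶ y.obj c))

end

/-!
Exactness says that the quotient of factorization data by the zig-zag relation maps bijectively
onto `D(x b, y c)`; a map out of a quotient is bijective exactly when the underlying map is
surjective and identifies only zig-zag-related elements, which gives the characterization.
For the comma square, any factorization `(a, ψ, φ)` of `ρ` is joined, through the object
`(b, a.right, x ψ ≫ a.hom)`, to the tautological factorization `((b, c, ρ), 𝟙, 𝟙)`, so two
factorizations of the same arrow are connected by a zig-zag.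
-/

open Relation

theorem Quot.injective_lift_iff {α β : Type*} {r : α → α → Prop} {f : α → β}
    (h : ∀ a b, r a b → f a = f b) :
    Function.Injective (Quot.lift f h) ↔ ∀ a b, f a = f b → EqvGen r a b := by
  refine ⟨fun hinj a b hab => Quot.eq.mp (hinj hab), fun hinj z w hzw => ?_⟩
  induction z using Quot.ind
  induction w using Quot.ind
  exact Quot.eq.mpr (hinj _ _ hzw)

theorem Quot.bijective_lift_iff {α β : Type*} {r : α → α → Prop} {f : α → β}
    (h : ∀ a b, r a b → f a = f b) :
    Function.Bijective (Quot.lift f h) ↔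
      Function.Surjective f ∧ ∀ a b, f a = f b → EqvGen r a b := by
  rw [Function.Bijective, Quot.injective_lift_iff, Quot.surjective_lift, and_comm]

section

universe v₁ v₂ v₃ v₄ u₁ u₂ u₃ u₄

variable {A : Type u₁} {B : Type u₂} {C : Type u₃} {D : Type u₄}
  [Category.{v₁} A] [Category.{v₂} B] [Category.{v₃} C] [Category.{v₄} D]

theorem isExactSq_iff (u : A ⥤ B) (v : A ⥤ C) (x : B ⥤ D) (y : C ⥤ D)
    (τ : u ⋙ x ⟶ v ⋙ y) :
    IsExactSq u v x y τ ↔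
      (∀ (b : B) (c : C) (ρ : x.obj b ⟶ y.obj c), ∃ p, factEval u v x y τ p = ρ) ∧
        ∀ (b : B) (c : C) p q, factEval u v x y τ (b := b) (c := c) p =
          factEval u v x y τ q → EqvGen (factRel u v b c) p q := by
  simp only [IsExactSq, Quot.bijective_lift_iff, Function.Surjective, forall_and]

variable (x : B ⥤ D) (y : C ⥤ D) {b : B} {c : C}

@[simp]
theorem factEval_comma (p : Σ a : Comma x y, (b ⟶ a.left) × (a.right ⟶ c)) :
    factEval (Comma.fst x y) (Comma.snd x y) x y (Comma.natTrans x y) p =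
      x.map p.2.1 ≫ p.1.hom ≫ y.map p.2.2 :=
  rfl

theorem eqvGen_factRel_comma_tautological
    (p : Σ a : Comma x y, (b ⟶ a.left) × (a.right ⟶ c)) :
    EqvGen (factRel (Comma.fst x y) (Comma.snd x y) b c) p
      ⟨⟨b, c, factEval _ _ x y (Comma.natTrans x y) p⟩, 𝟙 b, 𝟙 c⟩ := by
  obtain ⟨a, ψ, φ⟩ := p
  let a' : Comma x y := ⟨b, a.right, x.map ψ ≫ a.hom⟩
  have to_p : factRel (Comma.fst x y) (Comma.snd x y) b c ⟨a', 𝟙 b, φ⟩ ⟨a, ψ, φ⟩ :=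
    ⟨⟨ψ, 𝟙 _, by simp [a']⟩, Category.id_comp ψ, (Category.id_comp φ).symm⟩
  have to_tautological : factRel (Comma.fst x y) (Comma.snd x y) b c ⟨a', 𝟙 b, φ⟩
      ⟨⟨b, c, x.map ψ ≫ a.hom ≫ y.map φ⟩, 𝟙 b, 𝟙 c⟩ :=
    ⟨⟨𝟙 _, φ, by simp [a']⟩, Category.id_comp _, (Category.comp_id φ).symm⟩
  exact (EqvGen.rel _ _ to_p).symm.trans _ _ _ (EqvGen.rel _ _ to_tautological)

theorem isExactSq_comma :
    IsExactSq (Comma.fst x y) (Comma.snd x y) x y (Comma.natTrans x y) := by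
  refine (isExactSq_iff _ _ x y _).mpr ⟨fun b c ρ => ⟨⟨⟨b, c, ρ⟩, 𝟙 b, 𝟙 c⟩, by simp⟩,
    fun b c p q hpq => ?_⟩
  have hq := (eqvGen_factRel_comma_tautological x y q).symm
  rw [← hpq] at hq
  exact (eqvGen_factRel_comma_tautological x y p).trans _ _ _ hq

end

/-- A square of functors with `τ : x ∘ u ⟶ y ∘ v` is exact iff every arrow
`ρ : x b ⟶ y c` factors as `y φ ≫ τ_a ≫ x ψ` and any two factorizations of
the same arrow are connected by a zig-zag; in particular, comma squares are
exact. -/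
theorem stmt_14 :
    (∀ {A B C D : Type u} [Category.{v} A] [Category.{v} B] [Category.{v} C]
        [Category.{v} D] (u : A ⥤ B) (v : A ⥤ C) (x : B ⥤ D) (y : C ⥤ D)
        (τ : u ⋙ x ⟶ v ⋙ y),
        IsExactSq u v x y τ ↔
          ((∀ (b : B) (c : C) (ρ : x.obj b ⟶ y.obj c),
              ∃ p, factEval u v x y τ p = ρ) ∧
            (∀ (b : B) (c : C) p q, factEval u v x y τ (b := b) (c := c) p =
                factEval u v x y τ q →
              Relation.EqvGen (factRel u v b c) p q))) ∧
      (∀ {B C D : Type u} [Category.{v} B] [Category.{v} C] [Category.{v} D]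
          (x : B ⥤ D) (y : C ⥤ D),
          IsExactSq (Comma.fst x y) (Comma.snd x y) x y (Comma.natTrans x y)) :=
  ⟨isExactSq_iff, isExactSq_comma⟩
end
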